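/- For every l ≥ 1, k ≥ l and t ≥ 1, the graph C_{k,t} (a cycle of t copies of A_l, where A_l = K_{k+l+2} minus l edges sharing a common vertex, with consecutive copies joined by l edges so the result is (k+l+1)-regular and claw-free) is a connected claw-free (k+l+1)-regular graph of order n = t(k+l+2) with γ_{p,k}(C_{k,t}) ≥ t = n/(k+l+2). -/

import Mathlib

open SimpleGraph

/-- Closed neighborhood of a set of vertices: `N[S]`. -/
def closedNbhd {V : Type*} (G : SimpleGraph V) (S : Set V) : Set V :=
  S ∪ {v | ∃ u ∈ S, G.Adj u v}

/-- The monitored sets `P^i(S)` of the k-power domination process: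
`P^0(S) = N[S]`, `P^{i+1}(S) = ⋃ {N[v] : v ∈ P^i(S), |N[v] \ P^i(S)| ≤ k}`. -/
def monitored {V : Type*} (G : SimpleGraph V) (k : ℕ) (S : Set V) : ℕ → Set V
  | 0 => closedNbhd G S
  | i + 1 => {w | ∃ v ∈ monitored G k S i,
      (closedNbhd G {v} \ monitored G k S i).ncard ≤ k ∧ w ∈ closedNbhd G {v}}

/-- `P^∞(S)`, realized as `P^{|V|}(S)` on a finite vertex type. -/
def monitoredInf {V : Type*} (G : SimpleGraph V) (k : ℕ) (S : Set V) : Set V :=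
  monitored G k S (Nat.card V)

/-- `S` is a k-power dominating set. -/
def IsKPDS {V : Type*} (G : SimpleGraph V) (k : ℕ) (S : Set V) : Prop :=
  monitoredInf G k S = Set.univ

/-- The k-power domination number `γ_{p,k}(G)`. -/
noncomputable def powerDomNumber {V : Type*} (G : SimpleGraph V) (k : ℕ) : ℕ :=
  sInf {m | ∃ S : Set V, S.Finite ∧ S.ncard = m ∧ IsKPDS G k S}

/-- A k-fort: a nonempty set `F` such that every vertex of `N(F) \ F`
has at least `k+1` neighbors in `F`. -/
def IsKFort {V : Type*} (G : SimpleGraph V) (k : ℕ) (F : Set V) : Prop :=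
  F.Nonempty ∧ ∀ v ∈ closedNbhd G F \ F, k + 1 ≤ (G.neighborSet v ∩ F).ncard

/-- Claw-free: no induced `K_{1,3}`. -/
def ClawFree {V : Type*} (G : SimpleGraph V) : Prop :=
  ∀ u a b c : V, G.Adj u a → G.Adj u b → G.Adj u c → a ≠ b → a ≠ c → b ≠ c →
    G.Adj a b ∨ G.Adj a c ∨ G.Adj b c

/-- `r`-regular. -/
def RegularOfDegree {V : Type*} (G : SimpleGraph V) (r : ℕ) : Prop :=
  ∀ v : V, (G.neighborSet v).ncard = r

/-- The domination number `γ(G)`. -/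
noncomputable def domNumber {V : Type*} (G : SimpleGraph V) : ℕ :=
  sInf {m | ∃ S : Set V, S.Finite ∧ S.ncard = m ∧
    ∀ v : V, v ∈ S ∨ ∃ u ∈ S, G.Adj v u}

/-- The total domination number `γ_t(G)`. -/
noncomputable def totalDomNumber {V : Type*} (G : SimpleGraph V) : ℕ :=
  sInf {m | ∃ S : Set V, S.Finite ∧ S.ncard = m ∧ ∀ v : V, ∃ u ∈ S, G.Adj v u}

/-- The graph `C_{k,t}`: a cycle of `t` copies of `A_l`, where `A_l` is
`K_{k+l+2}` minus the `l` edges joining vertex `0` to vertices `1,…,l`;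
consecutive copies are joined by the `l` edges from vertices `1,…,l` of copy `i`
to vertex `0` of copy `i+1`, restoring `(k+l+1)`-regularity. -/
def Cgraph (k l t : ℕ) [NeZero t] : SimpleGraph (Fin t × Fin (k + l + 2)) :=
  SimpleGraph.fromRel (fun p p' =>
    (p.1 = p'.1 ∧ ¬(p.2.val = 0 ∧ 1 ≤ p'.2.val ∧ p'.2.val ≤ l) ∧
      ¬(p'.2.val = 0 ∧ 1 ≤ p.2.val ∧ p.2.val ≤ l)) ∨
    (p'.1 = p.1 + 1 ∧ p'.2.val = 0 ∧ 1 ≤ p.2.val ∧ p.2.val ≤ l))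

/-! Call label `0` of a copy its hub and labels `1, …, l` its ports. Each vertex has exactly one
neighbour with every label other than its own, which gives regularity, and every neighbourhood is
covered by two cliques, which gives claw-freeness. The vertices with label greater than `l` in
copy `i` form a `k`-fort of `k + 1` vertices whose closed neighbourhood stays inside copy `i`;
monitoring can never enter a fort from outside, so every `k`-power dominating set meets each of
these `t` disjoint closed neighbourhoods. -/

section PowerDomination

variable {V : Type*} {G : SimpleGraph V} {k : ℕ}

theorem mem_closedNbhd {S : Set V} {x : V} :
    x ∈ closedNbhd G S ↔ ∃ s ∈ S, s = x ∨ G.Adj s x := by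
  simp only [closedNbhd, Set.mem_union, Set.mem_ofPred_eq]
  exact ⟨by rintro (hx | hx) <;> aesop, by rintro ⟨s, hs, rfl | h⟩ <;> aesop⟩

theorem disjoint_closedNbhd_comm {S F : Set V} :
    Disjoint (closedNbhd G S) F ↔ Disjoint S (closedNbhd G F) := by
  simp only [Set.disjoint_left, mem_closedNbhd]
  constructor
  · rintro h s hs ⟨x, hx, rfl | hxs⟩
    exacts [h ⟨x, hs, .inl rfl⟩ hx, h ⟨s, hs, .inr hxs.symm⟩ hx]
  · rintro h x ⟨s, hs, rfl | hsx⟩ hx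
    exacts [h hs ⟨s, hx, .inl rfl⟩, h hs ⟨x, hx, .inr hsx.symm⟩]

theorem monitored_univ (n : ℕ) : monitored G k Set.univ n = Set.univ := by
  induction n with
  | zero => exact Set.eq_univ_of_univ_subset Set.subset_union_left
  | succ n ih =>
    refine Set.eq_univ_of_forall fun w => ⟨w, by simp [ih], ?_, Set.mem_union_left _ rfl⟩
    simp [ih]

theorem isKPDS_univ : IsKPDS G k Set.univ := monitored_univ _

/-- Monitoring never enters a fort from outside: a vertex of `N(F) \ F` always has at least
`k + 1` unmonitored neighbours in `F`, so it can never force. -/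
theorem IsKFort.disjoint_monitored [Finite V] {F S : Set V} (hF : IsKFort G k F)
    (hS : Disjoint (closedNbhd G S) F) (n : ℕ) : Disjoint (monitored G k S n) F := by
  induction n with
  | zero => exact hS
  | succ n ih =>
    refine Set.disjoint_left.2 fun x ⟨v, hv, hforce, hxv⟩ hxF => ?_
    have hvF : v ∉ F := Set.disjoint_left.1 ih hv
    have hvx : G.Adj v x := by
      obtain ⟨_, rfl, rfl | h⟩ := mem_closedNbhd.1 hxv
      exacts [absurd hxF hvF, h]
    have hvNF : v ∈ closedNbhd G F \ F := ⟨mem_closedNbhd.2 ⟨x, hxF, .inr hvx.symm⟩, hvF⟩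
    have hsub : G.neighborSet v ∩ F ⊆ closedNbhd G {v} \ monitored G k S n :=
      fun y ⟨hy, hyF⟩ => ⟨mem_closedNbhd.2 ⟨v, rfl, .inr hy⟩, Set.disjoint_right.1 ih hyF⟩
    have := (hF.2 v hvNF).trans (Set.ncard_le_ncard hsub (Set.toFinite _))
    omega

theorem IsKFort.inter_closedNbhd_nonempty [Finite V] {F S : Set V} (hF : IsKFort G k F)
    (hS : IsKPDS G k S) : (S ∩ closedNbhd G F).Nonempty := by
  rw [← Set.not_disjoint_iff_nonempty_inter, ← disjoint_closedNbhd_comm]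
  intro hdisj
  obtain ⟨x, hx⟩ := hF.1
  have hmon : x ∈ monitoredInf G k S := hS ▸ Set.mem_univ x
  exact Set.disjoint_left.1 (hF.disjoint_monitored hdisj _) hmon hx

theorem le_powerDomNumber [Finite V] {m : ℕ} (h : ∀ S, IsKPDS G k S → m ≤ S.ncard) :
    m ≤ powerDomNumber G k :=
  le_csInf ⟨_, Set.univ, Set.toFinite _, rfl, isKPDS_univ⟩ fun _ ⟨S, _, hm, hS⟩ => hm ▸ h S hS

theorem card_le_powerDomNumber_of_isKFort [Finite V] {ι : Type*} {F : ι → Set V}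
    (hF : ∀ i, IsKFort G k (F i))
    (hdisj : Pairwise fun i j => Disjoint (closedNbhd G (F i)) (closedNbhd G (F j))) :
    Nat.card ι ≤ powerDomNumber G k := by
  refine le_powerDomNumber fun S hS => ?_
  choose s hs using fun i => (hF i).inter_closedNbhd_nonempty hS
  have hinj : Function.Injective fun i => (⟨s i, (hs i).1⟩ : S) := fun i j hij => by
    by_contra hne
    have hsij : s i = s j := congrArg Subtype.val hij
    exact Set.disjoint_left.1 (hdisj hne) (hs i).2 (hsij ▸ (hs j).2)
  simpa [Nat.card_coe_set_eq] using Nat.card_le_card_of_injective _ hinj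

end PowerDomination

theorem clawFree_of_forall_neighborSet_subset_union {V : Type*} {G : SimpleGraph V}
    (h : ∀ u, ∃ A B : Set V, G.IsClique A ∧ G.IsClique B ∧ G.neighborSet u ⊆ A ∪ B) :
    ClawFree G := by
  intro u a b c ha hb hc hab hac hbc
  obtain ⟨A, B, hA, hB, hcover⟩ := h u
  rcases hcover ha with ha | ha <;> rcases hcover hb with hb | hb <;>
    rcases hcover hc with hc | hc <;>
    first
    | exact .inl (hA ha hb hab) | exact .inl (hB ha hb hab)
    | exact .inr (.inl (hA ha hc hac)) | exact .inr (.inl (hB ha hc hac))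
    | exact .inr (.inr (hA hb hc hbc)) | exact .inr (.inr (hB hb hc hbc))

namespace Cgraph

variable {k l t : ℕ} [NeZero t]

theorem adj_iff {p q : Fin t × Fin (k + l + 2)} :
    (Cgraph k l t).Adj p q ↔ p ≠ q ∧
      ((p.1 = q.1 ∧ ¬(p.2.val = 0 ∧ 1 ≤ q.2.val ∧ q.2.val ≤ l) ∧
          ¬(q.2.val = 0 ∧ 1 ≤ p.2.val ∧ p.2.val ≤ l)) ∨
        (q.1 = p.1 + 1 ∧ q.2.val = 0 ∧ 1 ≤ p.2.val ∧ p.2.val ≤ l) ∨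
        (p.1 = q.1 + 1 ∧ p.2.val = 0 ∧ 1 ≤ q.2.val ∧ q.2.val ≤ l)) := by
  rw [Cgraph, fromRel_adj]
  grind

/-- The neighbour of `(i, j)` with label `x`: every vertex has exactly one neighbour with each
label other than its own. -/
def neighbor (l : ℕ) {k t : ℕ} [NeZero t] (i : Fin t) (j x : Fin (k + l + 2)) :
    Fin t × Fin (k + l + 2) :=
  (if j.val = 0 ∧ 1 ≤ x.val ∧ x.val ≤ l then i - 1
    else if 1 ≤ j.val ∧ j.val ≤ l ∧ x.val = 0 then i + 1 else i, x)

theorem adj_iff_neighbor (i i' : Fin t) (j x : Fin (k + l + 2)) :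
    (Cgraph k l t).Adj (i, j) (i', x) ↔ x ≠ j ∧ (neighbor l i j x).1 = i' := by
  rw [adj_iff, neighbor]
  split_ifs <;> grind

theorem neighborSet_eq_image (i : Fin t) (j : Fin (k + l + 2)) :
    (Cgraph k l t).neighborSet (i, j) = neighbor l i j '' {j}ᶜ := by
  ext ⟨i', x⟩
  rw [mem_neighborSet, adj_iff_neighbor]
  constructor
  · rintro ⟨hx, rfl⟩
    exact ⟨x, hx, rfl⟩
  · rintro ⟨y, hy, hyx⟩
    obtain rfl : y = x := congrArg Prod.snd hyx
    exact ⟨hy, congrArg Prod.fst hyx⟩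

theorem neighborSet_ncard (v : Fin t × Fin (k + l + 2)) :
    ((Cgraph k l t).neighborSet v).ncard = k + l + 1 := by
  rw [neighborSet_eq_image, Set.ncard_image_of_injective _ fun x y h => congrArg Prod.snd h,
    Set.ncard_compl, Set.ncard_singleton, Nat.card_eq_fintype_card, Fintype.card_fin]
  rfl

theorem adj_of_fst_eq {p q : Fin t × Fin (k + l + 2)} (h1 : p.1 = q.1) (h2 : p.2 ≠ q.2)
    (hpq : ¬(p.2.val = 0 ∧ 1 ≤ q.2.val ∧ q.2.val ≤ l))
    (hqp : ¬(q.2.val = 0 ∧ 1 ≤ p.2.val ∧ p.2.val ≤ l)) : (Cgraph k l t).Adj p q :=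
  adj_iff.2 ⟨fun h => h2 (congrArg Prod.snd h), .inl ⟨h1, hpq, hqp⟩⟩

theorem isClique_copy_of_ne_zero (i : Fin t) :
    (Cgraph k l t).IsClique {p | p.1 = i ∧ p.2.val ≠ 0} := by
  rintro p ⟨hp, hp0⟩ q ⟨hq, hq0⟩ hpq
  exact adj_of_fst_eq (hp.trans hq.symm) (fun h => hpq (Prod.ext (hp.trans hq.symm) h))
    (by omega) (by omega)

theorem isClique_copy_of_not_port (i : Fin t) :
    (Cgraph k l t).IsClique {p | p.1 = i ∧ (p.2.val = 0 ∨ l < p.2.val)} := by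
  rintro p ⟨hp, hp0⟩ q ⟨hq, hq0⟩ hpq
  exact adj_of_fst_eq (hp.trans hq.symm) (fun h => hpq (Prod.ext (hp.trans hq.symm) h))
    (by omega) (by omega)

theorem isClique_ports_bridge (i : Fin t) :
    (Cgraph k l t).IsClique
      {p | (p.1 = i ∧ 1 ≤ p.2.val ∧ p.2.val ≤ l) ∨ (p.1 = i + 1 ∧ p.2.val = 0)} := by
  rintro p hp q hq hpq
  rw [adj_iff]
  refine ⟨hpq, ?_⟩
  grind

/-- The neighbourhood of a hub is covered by the non-ports of its copy and the ports of the
previous copy, that of a port by the non-hubs of its copy and the bridge to the next hub, and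
that of any other vertex by the non-hubs and the non-ports of its copy. -/
theorem clawFree : ClawFree (Cgraph k l t) := by
  refine clawFree_of_forall_neighborSet_subset_union fun ⟨i, j⟩ => ?_
  rw [neighborSet_eq_image]
  obtain hj | hj | hj : j.val = 0 ∨ (1 ≤ j.val ∧ j.val ≤ l) ∨ l < j.val := by omega
  on_goal 1 => refine ⟨_, _, isClique_copy_of_not_port i, isClique_ports_bridge (i - 1), ?_⟩
  on_goal 2 => refine ⟨_, _, isClique_copy_of_ne_zero i, isClique_ports_bridge i, ?_⟩
  on_goal 3 => refine ⟨_, _, isClique_copy_of_ne_zero i, isClique_copy_of_not_port i, ?_⟩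
  all_goals
    rintro _ ⟨x, hx, rfl⟩
    simp only [neighbor]
    split_ifs <;> grind

theorem reachable_last_of_fst_eq (i : Fin t) (j : Fin (k + l + 2)) :
    (Cgraph k l t).Reachable (i, Fin.last _) (i, j) := by
  rcases eq_or_ne j (Fin.last _) with rfl | hj
  · rfl
  · exact (adj_of_fst_eq (p := (i, Fin.last _)) (q := (i, j)) rfl hj.symm (by simp)
      (by simp)).reachable

theorem reachable_last_succ (hl : 1 ≤ l) (i : Fin t) :
    (Cgraph k l t).Reachable (i, Fin.last _) (i + 1, Fin.last _) := by
  have hport : (Cgraph k l t).Adj (i, ⟨1, by omega⟩) (i + 1, ⟨0, by omega⟩) :=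
    adj_iff.2 ⟨by simp [Prod.ext_iff], .inr (.inl ⟨rfl, rfl, le_rfl, hl⟩)⟩
  exact ((reachable_last_of_fst_eq i _).trans hport.reachable).trans
    (reachable_last_of_fst_eq (i + 1) _).symm

open Fin.CommRing in
theorem connected (hl : 1 ≤ l) : (Cgraph k l t).Connected := by
  have hcycle : ∀ n : ℕ, (Cgraph k l t).Reachable (0, Fin.last _) ((n : Fin t), Fin.last _) := by
    intro n
    induction n with
    | zero => simp
    | succ n ih => simpa using ih.trans (reachable_last_succ hl _)
  refine (connected_iff_exists_forall_reachable _).2 ⟨(0, Fin.last _), fun ⟨i, j⟩ => ?_⟩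
  have hi := hcycle i.val
  rw [Fin.cast_val_eq_self] at hi
  exact hi.trans (reachable_last_of_fst_eq i j)

def fort (k l t : ℕ) (i : Fin t) : Set (Fin t × Fin (k + l + 2)) := {p | p.1 = i ∧ l < p.2.val}

omit [NeZero t] in
theorem fort_ncard (i : Fin t) : (fort k l t i).ncard = k + 1 := by
  have : fort k l t i = Prod.mk i '' ↑(Finset.Ioi (⟨l, by omega⟩ : Fin (k + l + 2))) := by
    ext ⟨i', x⟩
    simp [fort, Fin.lt_def, eq_comm, and_comm]
  rw [this, Set.ncard_image_of_injective _ (Prod.mk_right_injective i), Set.ncard_coe_finset,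
    Fin.card_Ioi]
  dsimp only
  omega

theorem fst_eq_of_adj_mem_fort {i : Fin t} {v w : Fin t × Fin (k + l + 2)}
    (hw : w ∈ fort k l t i) (hvw : (Cgraph k l t).Adj v w) : v.1 = i := by
  obtain ⟨rfl, hw⟩ := hw
  rw [adj_iff] at hvw
  omega

theorem closedNbhd_fort_subset (i : Fin t) :
    closedNbhd (Cgraph k l t) (fort k l t i) ⊆ {p | p.1 = i} := by
  intro v hv
  obtain ⟨w, hw, rfl | hwv⟩ := mem_closedNbhd.1 hv
  exacts [hw.1, fst_eq_of_adj_mem_fort hw hwv.symm]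

/-- A vertex of copy `i` outside the fort has label at most `l`, so it sees the whole fort. -/
theorem isKFort_fort (i : Fin t) : IsKFort (Cgraph k l t) k (fort k l t i) := by
  refine ⟨⟨(i, Fin.last _), rfl, by simp⟩, fun v ⟨hv, hvF⟩ => ?_⟩
  have hvi : v.1 = i := closedNbhd_fort_subset i hv
  have hvl : v.2.val ≤ l := not_lt.1 fun h => hvF ⟨hvi, h⟩
  have hsub : fort k l t i ⊆ (Cgraph k l t).neighborSet v ∩ fort k l t i := by
    rintro w ⟨hwi, hwl⟩
    exact ⟨adj_of_fst_eq (hvi.trans hwi.symm) (Fin.ne_of_val_ne (by omega)) (by omega) (by omega),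
      hwi, hwl⟩
  calc k + 1 = (fort k l t i).ncard := (fort_ncard i).symm
    _ ≤ _ := Set.ncard_le_ncard hsub (Set.toFinite _)

theorem pairwise_disjoint_closedNbhd_fort :
    Pairwise fun i j : Fin t => Disjoint (closedNbhd (Cgraph k l t) (fort k l t i))
      (closedNbhd (Cgraph k l t) (fort k l t j)) := fun i j hij =>
  Set.disjoint_of_subset (closedNbhd_fort_subset i) (closedNbhd_fort_subset j)
    (Set.disjoint_left.2 fun _ hi hj => hij (hi.symm.trans hj))

end Cgraph

theorem Cgraph_tight (k l t : ℕ) (hl : 1 ≤ l) (ht : 1 ≤ t) :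
    haveI : NeZero t := ⟨by omega⟩
    (Cgraph k l t).Connected ∧ ClawFree (Cgraph k l t) ∧
      RegularOfDegree (Cgraph k l t) (k + l + 1) ∧
      Nat.card (Fin t × Fin (k + l + 2)) = t * (k + l + 2) ∧
      t ≤ powerDomNumber (Cgraph k l t) k := by
  have : NeZero t := ⟨by omega⟩
  refine ⟨Cgraph.connected hl, Cgraph.clawFree, Cgraph.neighborSet_ncard, by simp, ?_⟩
  simpa using card_le_powerDomNumber_of_isKFort Cgraph.isKFort_fort
    Cgraph.pairwise_disjoint_closedNbhd_fort
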